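/- arXiv:math/0405087 — 3 statements merged into one kernel-verified Lean document; each statement's English description precedes it below -/
import Mathlib

section
/- Let p be any prime and let r be an arbitrary positive integer. There exists a group K of nilpotency class exactly 2+(r-1)(p-1), generated by elements y and x of orders p and p^r respectively, such that x^(p^(r-1)) does not commute with y. -/
open Polynomial AdjoinRoot SemidirectProduct
open scoped commutatorElement

lemma key_poly (A : Type) [CommRing A] (p : ℕ) (hp : p.Prime) :
    ∃ h : A[X], (X + 1) ^ p = X ^ p + (p : A[X]) * X * h + 1 ∧ h.coeff 0 = 1 := by
  refine ⟨∑ k ∈ Finset.Ico 1 p, C ((p.choose k / p : ℕ) : A) * X ^ (k - 1), ?_, ?_⟩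
  · have hexp : (X + 1 : A[X]) ^ p = ∑ k ∈ Finset.range (p + 1), X ^ k * (p.choose k : A[X]) := by
      rw [add_pow]; simp
    rw [hexp]
    have h1 : (p : A[X]) * X * ∑ k ∈ Finset.Ico 1 p, C ((p.choose k / p : ℕ) : A) * X ^ (k - 1)
        = ∑ k ∈ Finset.Ico 1 p, X ^ k * (p.choose k : A[X]) := by
      rw [Finset.mul_sum]
      refine Finset.sum_congr rfl fun k hk => ?_
      obtain ⟨hk1, hk2⟩ := Finset.mem_Ico.mp hk
      have hdvd : p ∣ p.choose k := hp.dvd_choose_self (by omega) hk2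
      have : (p : A[X]) * C ((p.choose k / p : ℕ) : A) = (p.choose k : A[X]) := by
        rw [← C_eq_natCast, ← C_eq_natCast, ← C_mul, ← Nat.cast_mul, Nat.mul_div_cancel' hdvd]
      calc (p : A[X]) * X * (C ((p.choose k / p : ℕ) : A) * X ^ (k - 1))
          = ((p : A[X]) * C ((p.choose k / p : ℕ) : A)) * (X * X ^ (k - 1)) := by ring
        _ = X ^ k * (p.choose k : A[X]) := by
            rw [this, ← pow_succ', Nat.sub_add_cancel hk1, mul_comm]
    rw [h1]
    have hp1 : 1 ≤ p := hp.one_lt.le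
    rw [Finset.range_eq_Ico, Finset.sum_Ico_succ_top (by omega),
      Finset.sum_eq_sum_Ico_succ_bot (by omega)]
    simp [Nat.choose_self, Nat.choose_zero_right]
    ring
  · rw [finset_sum_coeff]
    rw [Finset.sum_eq_single 1]
    · simp [Nat.choose_one_right, Nat.div_self hp.pos]
    · intro k hk hk1
      obtain ⟨h1, h2⟩ := Finset.mem_Ico.mp hk
      rw [coeff_C_mul, coeff_X_pow, if_neg (by omega), mul_zero]
    · intro h1
      simp only [Finset.mem_Ico, not_and, not_lt] at h1
      have := h1 le_rfl
      have := hp.one_lt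
      omega

namespace ExGrpAux

variable (p r : ℕ)

noncomputable def fp : (ZMod (p^r))[X] := (X + 1)^p - 1
noncomputable abbrev R0 := AdjoinRoot (fp p r)
noncomputable def lam0 : R0 p r := root (fp p r)
noncomputable def J0 : Ideal (R0 p r) :=
  Ideal.span {(p : R0 p r)^(r-1) * (lam0 p r)^2}
noncomputable abbrev Rr := (R0 p r) ⧸ (J0 p r)
noncomputable def lam : Rr p r := Ideal.Quotient.mk _ (lam0 p r)

variable {p r}


lemma one_lt_pow' (hp : p.Prime) (hr : 1 ≤ r) : 1 < p ^ r := by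
  calc 1 < p := hp.one_lt
  _ = p ^ 1 := (pow_one p).symm
  _ ≤ p ^ r := Nat.pow_le_pow_right hp.pos hr

lemma monic_aux (hp : p.Prime) (hr : 1 ≤ r) : ((X + 1 : (ZMod (p^r))[X])^p).Monic := by
  rw [← C_1]; exact (monic_X_add_C 1).pow p

lemma natDegree_aux (hp : p.Prime) (hr : 1 ≤ r) :
    ((X + 1 : (ZMod (p^r))[X])^p).natDegree = p := by
  haveI : Fact (1 < p ^ r) := ⟨one_lt_pow' hp hr⟩
  rw [← C_1, (monic_X_add_C (1 : ZMod (p^r))).natDegree_pow, natDegree_X_add_C, mul_one]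

lemma monic_fp (hp : p.Prime) (hr : 1 ≤ r) : (fp p r).Monic := by
  haveI : Fact (1 < p ^ r) := ⟨one_lt_pow' hp hr⟩
  have h1 := monic_aux hp hr
  have : fp p r = (X + 1)^p - C 1 := by rw [fp, C_1]
  rw [this]
  apply h1.sub_of_left
  rw [degree_C one_ne_zero, degree_eq_natDegree h1.ne_zero, natDegree_aux hp hr]
  exact_mod_cast hp.pos

lemma natDegree_fp (hp : p.Prime) (hr : 1 ≤ r) : (fp p r).natDegree = p := by
  haveI : Fact (1 < p ^ r) := ⟨one_lt_pow' hp hr⟩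
  have : fp p r = (X + 1)^p - C 1 := by rw [fp, C_1]
  rw [this, natDegree_sub_C, natDegree_aux hp hr]

lemma root_rel : ((lam0 p r) + 1)^p = 1 := by
  have h2 : (aeval (root (fp p r))) ((X + 1 : (ZMod (p^r))[X])^p - 1) = 0 := by
    rw [← fp, AdjoinRoot.aeval_eq]; exact AdjoinRoot.mk_self
  simp only [map_sub, map_pow, map_add, aeval_X, map_one] at h2
  rw [lam0]
  linear_combination h2

lemma lam0_pow_p (hp : p.Prime) : ∃ H2 : R0 p r,
    (lam0 p r)^p = -((p : R0 p r) * (lam0 p r) * (1 + (lam0 p r) * H2)) := by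
  obtain ⟨h, hid, hc0⟩ := key_poly (ZMod (p^r)) p hp
  have happ := congrArg (aeval (lam0 p r)) hid
  simp only [map_add, map_pow, map_mul, aeval_X, map_one, map_natCast] at happ
  rw [root_rel] at happ
  refine ⟨aeval (lam0 p r) h.divX, ?_⟩
  have hh : h = X * h.divX + C (h.coeff 0) := (X_mul_divX_add h).symm
  rw [hh, hc0] at happ
  simp only [map_add, map_mul, aeval_X, map_one, C_1] at happ
  linear_combination -happ


noncomputable def H2 (hp : p.Prime) : R0 p r := (lam0_pow_p hp).choose

lemma H2_spec (hp : p.Prime) :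
    (lam0 p r)^p = -((p : R0 p r) * (lam0 p r) * (1 + (lam0 p r) * H2 hp)) :=
  (lam0_pow_p hp).choose_spec

lemma lam0_pow_lin (hp : p.Prime) (k : ℕ) :
    (lam0 p r)^(k*(p-1)+1) = (-(p : R0 p r) * (1 + (lam0 p r) * H2 hp))^k * lam0 p r := by
  induction k with
  | zero => simp
  | succ k ih =>
    have e1 : (k+1)*(p-1)+1 = (k*(p-1)+1)+(p-1) := by ring
    have e2 : (lam0 p r) * (lam0 p r)^(p-1) = (lam0 p r) ^ p := by
      rw [← pow_succ']
      congr 1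
      have := hp.pos; omega
    rw [e1, pow_add, ih, mul_assoc, e2, H2_spec hp]
    ring

lemma lam0_pow_mem (hp : p.Prime) (k : ℕ) :
    (lam0 p r)^(k*(p-1)+2) ∈ Ideal.span {(p : R0 p r)^k * (lam0 p r)^2} := by
  apply Ideal.mem_span_singleton'.mpr
  refine ⟨(-(1 + lam0 p r * H2 hp))^k, ?_⟩
  have e : k*(p-1)+2 = (k*(p-1)+1)+1 := by omega
  rw [e, pow_succ (lam0 p r) (k*(p-1)+1), lam0_pow_lin hp k]
  have hmp : (-(p : R0 p r) * (1 + lam0 p r * H2 hp))^k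
      = (-(1 + lam0 p r * H2 hp))^k * (p : R0 p r)^k := by
    rw [← mul_pow]; congr 1; ring
  rw [hmp]; ring

lemma cast_p_pow_r (hr : 1 ≤ r) : ((p : R0 p r))^r = 0 := by
  have h1 : ((p^r : ℕ) : R0 p r) = 0 := by
    rw [← map_natCast (algebraMap (ZMod (p^r)) (R0 p r)), ZMod.natCast_self, map_zero]
  push_cast at h1
  exact h1

lemma key1 (hp : p.Prime) (hr : 1 ≤ r) :
    (p : R0 p r)^(r-1) * (lam0 p r)^p = 0 := by
  rw [H2_spec hp]
  have : (p : R0 p r)^(r-1) * (p : R0 p r) = (p : R0 p r)^r := by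
    rw [← pow_succ]; congr 1; omega
  calc (p : R0 p r)^(r-1) * -((p : R0 p r) * (lam0 p r) * (1 + (lam0 p r) * H2 hp))
      = ((p : R0 p r)^(r-1) * (p : R0 p r)) * -((lam0 p r) * (1 + (lam0 p r) * H2 hp)) := by ring
    _ = 0 := by rw [this, cast_p_pow_r hr, zero_mul]

lemma key2 (hp : p.Prime) (hr : 1 ≤ r) :
    (p : R0 p r)^(r-1) * (lam0 p r)^(p+1) = 0 := by
  rw [pow_succ, ← mul_assoc, key1 hp hr, zero_mul]

lemma not_mem_J0 (hp : p.Prime) (hr : 1 ≤ r) :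
    (p : R0 p r)^(r-1) * lam0 p r ∉ J0 p r := by
  haveI : Fact (1 < p ^ r) := ⟨one_lt_pow' hp hr⟩
  set pb := AdjoinRoot.powerBasis' (monic_fp hp hr) with hpb
  have hdim : pb.dim = p := by rw [hpb, powerBasis'_dim, natDegree_fp hp hr]
  have hgen : pb.gen = lam0 p r := by rw [hpb, powerBasis'_gen]; rfl
  clear_value pb
  clear hpb
  set idx1 : Fin pb.dim := ⟨1, by rw [hdim]; exact hp.one_lt⟩ with hidx
  set coord1 := pb.basis.coord idx1 with hcoord
  have coord_pow : ∀ i : ℕ, i < p → coord1 ((lam0 p r)^i) = if i = 1 then 1 else 0 := by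
    intro i hi
    have hb : (lam0 p r)^i = pb.basis ⟨i, by rw [hdim]; exact hi⟩ := by
      rw [pb.basis_eq_pow, hgen]
    rw [hb, hcoord, Module.Basis.coord_apply, Module.Basis.repr_self, Finsupp.single_apply]
    have : (⟨i, by rw [hdim]; exact hi⟩ : Fin pb.dim) = idx1 ↔ i = 1 := by
      rw [Fin.ext_iff]
    simp only [this]
  intro hmem
  rw [J0, Ideal.mem_span_singleton'] at hmem
  obtain ⟨a, ha⟩ := hmem
  -- coord1 of LHS is 0
  have hzero : ∀ a : R0 p r, coord1 (a * ((p : R0 p r)^(r-1) * (lam0 p r)^2)) = 0 := by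
    intro a
    have hmem' : a ∈ Submodule.span (ZMod (p^r)) (Set.range pb.basis) := by
      rw [pb.basis.span_eq]; trivial
    induction hmem' using Submodule.span_induction with
    | mem z hz =>
      obtain ⟨i, rfl⟩ := hz
      have hb : pb.basis i = (lam0 p r)^(i:ℕ) :=
        (pb.basis_eq_pow i).trans (congrArg (fun z => z ^ (i:ℕ)) hgen)
      simp only [hb]
      have hi : (i : ℕ) < p := lt_of_lt_of_le i.isLt (le_of_eq hdim)
      have hcase : ((i : ℕ) + 2 < p) ∨ ((i : ℕ) + 2 = p) ∨ ((i : ℕ) + 2 = p + 1) := by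
        omega
      have hmul : (lam0 p r)^(i:ℕ) * ((p : R0 p r)^(r-1) * (lam0 p r)^2)
          = ((p : ZMod (p^r))^(r-1)) • (lam0 p r)^((i:ℕ)+2) := by
        rw [Algebra.smul_def, map_pow]
        have : algebraMap (ZMod (p^r)) (R0 p r) (p : ZMod (p^r)) = (p : R0 p r) :=
          map_natCast _ p
        rw [this, pow_add]
        ring
      rcases hcase with h | h | h
      · rw [hmul, map_smul, coord_pow _ h, if_neg (by omega), smul_zero]
      · have e4 : (lam0 p r)^((i:ℕ)+2) = (lam0 p r)^p := congrArg (fun n => (lam0 p r)^n) h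
        have e3 : (lam0 p r)^(i:ℕ) * ((p : R0 p r)^(r-1) * (lam0 p r)^2)
            = (p : R0 p r)^(r-1) * (lam0 p r)^((i:ℕ)+2) := by rw [pow_add]; ring
        rw [e3, e4, key1 hp hr, map_zero]
      · have e4 : (lam0 p r)^((i:ℕ)+2) = (lam0 p r)^(p+1) := congrArg (fun n => (lam0 p r)^n) h
        have e3 : (lam0 p r)^(i:ℕ) * ((p : R0 p r)^(r-1) * (lam0 p r)^2)
            = (p : R0 p r)^(r-1) * (lam0 p r)^((i:ℕ)+2) := by rw [pow_add]; ring
        rw [e3, e4, key2 hp hr, map_zero]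
    | zero => rw [zero_mul, map_zero]
    | add y z hy hz ihy ihz => rw [add_mul, map_add, ihy, ihz, add_zero]
    | smul c y hy ihy => rw [smul_mul_assoc, map_smul, ihy, smul_zero]
  have h1 := hzero a
  rw [ha] at h1
  have h2 : coord1 ((p : R0 p r)^(r-1) * lam0 p r)
      = ((p : ZMod (p^r))^(r-1)) := by
    have hmul : (p : R0 p r)^(r-1) * lam0 p r
        = ((p : ZMod (p^r))^(r-1)) • (lam0 p r)^1 := by
      rw [Algebra.smul_def, map_pow, map_natCast, pow_one]
    rw [hmul, map_smul, coord_pow 1 hp.one_lt, if_pos rfl, smul_eq_mul, mul_one]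
  rw [h2] at h1
  have h3 : ((p^(r-1) : ℕ) : ZMod (p^r)) = 0 := by push_cast; exact h1
  rw [ZMod.natCast_eq_zero_iff] at h3
  have h4 := Nat.le_of_dvd (Nat.pow_pos hp.pos) h3
  have h5 := Nat.pow_lt_pow_right hp.one_lt (show r - 1 < r by omega)
  omega

lemma one_add_pow_aux {A : Type} [CommRing A] (a : A) (n : ℕ) :
    ∃ w : A, (1 + a)^n = 1 + a * w := by
  induction n with
  | zero => exact ⟨0, by simp⟩
  | succ n ih =>
    obtain ⟨w, hw⟩ := ih
    refine ⟨1 + w + a * w, ?_⟩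
    rw [pow_succ, hw]; ring

lemma lam0_m1_not_mem (hp : p.Prime) (hr : 1 ≤ r) :
    (lam0 p r)^((r-1)*(p-1)+1) ∉ J0 p r := by
  intro hmem
  obtain ⟨w, hw⟩ := one_add_pow_aux (lam0 p r * H2 hp) (r-1)
  have hlin := lam0_pow_lin (p := p) (r := r) hp (r-1)
  have hsq : ((-1 : R0 p r)^(r-1)) * ((-1 : R0 p r)^(r-1)) = 1 := by
    rw [← mul_pow]; norm_num
  have key : (p : R0 p r)^(r-1) * lam0 p r
      = (-1 : R0 p r)^(r-1) * (lam0 p r)^((r-1)*(p-1)+1)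
        - ((p : R0 p r)^(r-1) * (lam0 p r)^2) * (H2 hp * w) := by
    rw [hlin]
    have hfac : (-(p : R0 p r) * (1 + lam0 p r * H2 hp))^(r-1)
        = (-1 : R0 p r)^(r-1) * ((p : R0 p r)^(r-1) * (1 + lam0 p r * H2 hp)^(r-1)) := by
      rw [← mul_pow, ← mul_pow]; congr 1; ring
    rw [hfac, hw]
    linear_combination (-((p : R0 p r)^(r-1) * (1 + lam0 p r * (H2 hp * w)) * lam0 p r)) * hsq
  apply not_mem_J0 hp hr
  rw [key]
  apply Submodule.sub_mem
  · exact Ideal.mul_mem_left _ _ hmem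
  · exact Ideal.mul_mem_right _ _ (Ideal.subset_span rfl)


lemma lam_rel : ((lam p r) + 1)^p = 1 := by
  have : ((lam p r) + 1)^p = Ideal.Quotient.mk _ (((lam0 p r) + 1)^p) := by
    rw [map_pow, map_add, map_one, lam]
  rw [this, root_rel, map_one]

noncomputable def uu (hp : p.Prime) : (Rr p r)ˣ where
  val := lam p r + 1
  inv := (lam p r + 1)^(p-1)
  val_inv := by rw [← pow_succ']; have e : p - 1 + 1 = p := by have := hp.pos; omega
                rw [e, lam_rel]
  inv_val := by rw [← pow_succ]; have e : p - 1 + 1 = p := by have := hp.pos; omega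
                rw [e, lam_rel]

lemma uu_pow (hp : p.Prime) : (uu (p := p) (r := r) hp)^p = 1 := by
  ext
  rw [Units.val_pow_eq_pow_val]
  exact lam_rel

noncomputable def Hgrp (hp : p.Prime) : Subgroup (Rr p r)ˣ :=
  Subgroup.zpowers (uu hp)

noncomputable def y0 (hp : p.Prime) : Hgrp (p := p) (r := r) hp :=
  ⟨uu hp, Subgroup.mem_zpowers _⟩

/-- additive aut to mult aut -/
def mulAutOfAddAut (A : Type) [AddGroup A] : Multiplicative (AddAut A) →* MulAut (Multiplicative A) where
  toFun e := AddEquiv.toMultiplicative (Multiplicative.toAdd e)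
  map_one' := by ext x; rfl
  map_mul' := by intros; ext x; rfl

noncomputable def phi (hp : p.Prime) :
    (Hgrp (p := p) (r := r) hp) →* MulAut (Multiplicative (Rr p r)) :=
  (mulAutOfAddAut (Rr p r)).comp
    (AddAut.mulLeft.comp (Hgrp (p := p) (r := r) hp).subtype)

lemma phi_apply (hp : p.Prime) (c : Hgrp (p := p) (r := r) hp)
    (v : Multiplicative (Rr p r)) :
    phi hp c v = Multiplicative.ofAdd (((c : (Rr p r)ˣ) : Rr p r) * v.toAdd) := rfl

noncomputable abbrev K (hp : p.Prime) (_hr : 1 ≤ r) :=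
  SemidirectProduct (Multiplicative (Rr p r)) (Hgrp (p := p) (r := r) hp) (phi hp)

variable (hp : p.Prime) (hr : 1 ≤ r)

/-- the subgroup of K corresponding to an ideal of Rr -/
noncomputable def Gam (I : Ideal (Rr p r)) : Subgroup (K hp hr) :=
  Subgroup.map SemidirectProduct.inl
    (AddSubgroup.toSubgroup I.toAddSubgroup)

lemma mem_Gam {I : Ideal (Rr p r)} {g : K hp hr} :
    g ∈ Gam hp hr I ↔ ∃ v, v ∈ I ∧ g = inl (Multiplicative.ofAdd v) := by
  constructor
  · rintro ⟨n, hn, rfl⟩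
    exact ⟨Multiplicative.toAdd n, hn, rfl⟩
  · rintro ⟨v, hv, rfl⟩
    exact ⟨Multiplicative.ofAdd v, hv, rfl⟩

lemma inl_mem_Gam {I : Ideal (Rr p r)} {v : Rr p r} (hv : v ∈ I) :
    (inl (Multiplicative.ofAdd v) : K hp hr) ∈ Gam hp hr I :=
  (mem_Gam hp hr).mpr ⟨v, hv, rfl⟩

lemma conj_inl (b : K hp hr) (z : Multiplicative (Rr p r)) :
    b * inl z * b⁻¹ = inl (phi hp b.right z) := by
  conv_lhs => rw [← inl_left_mul_inr_right b]
  have h1 : (inl b.left * inr b.right * inl z * (inl b.left * inr b.right)⁻¹ : K hp hr)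
      = inl b.left * (inr b.right * inl z * (inr b.right)⁻¹) * (inl b.left)⁻¹ := by
    group
  rw [h1, ← map_inv inr, ← inl_aut, ← map_inv inl, ← map_mul, ← map_mul]
  congr 1
  rw [mul_comm, ← mul_assoc, inv_mul_cancel, one_mul]

lemma comm_inl (v : Multiplicative (Rr p r)) (b : K hp hr) :
    ⁅(inl v : K hp hr), b⁆
      = inl (Multiplicative.ofAdd
          ((1 - ((b.right : (Rr p r)ˣ) : Rr p r)) * v.toAdd)) := by
  rw [commutatorElement_def]
  have h1 : (inl v : K hp hr) * b * (inl v)⁻¹ * b⁻¹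
      = inl v * (b * (inl v)⁻¹ * b⁻¹) := by group
  rw [h1, ← map_inv, conj_inl, ← map_mul]
  congr 1
  rw [phi_apply]
  have hv : v = Multiplicative.ofAdd v.toAdd := rfl
  conv_lhs => rw [hv]
  rw [← ofAdd_add]
  congr 1
  simp only [toAdd_ofAdd, toAdd_inv]
  ring

lemma uu_val (hp : p.Prime) : ((uu (p := p) (r := r) hp : (Rr p r)ˣ) : Rr p r) = lam p r + 1 := rfl

lemma units_sub_one_aux (I : Ideal (Rr p r)) (w : (Rr p r)ˣ)
    (h : (1 : Rr p r) - (w : Rr p r) ∈ I) :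
    (1 : Rr p r) - ((w⁻¹ : (Rr p r)ˣ) : Rr p r) ∈ I := by
  have hww : ((w⁻¹ : (Rr p r)ˣ) : Rr p r) * (w : Rr p r) = 1 := by
    rw [← Units.val_mul, inv_mul_cancel, Units.val_one]
  have heq : (1 : Rr p r) - ((w⁻¹ : (Rr p r)ˣ) : Rr p r)
      = ((w⁻¹ : (Rr p r)ˣ) : Rr p r) * -((1 : Rr p r) - (w : Rr p r)) := by
    linear_combination -hww
  rw [heq]
  exact I.mul_mem_left _ (neg_mem h)

lemma units_sub_one {hp : p.Prime} (c : Hgrp (p := p) (r := r) hp) :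
    (1 : Rr p r) - ((c : (Rr p r)ˣ) : Rr p r) ∈ Ideal.span {lam p r} := by
  have haux : ∀ n : ℕ, (1 : Rr p r) - (((uu hp)^n : (Rr p r)ˣ) : Rr p r)
      ∈ Ideal.span {lam p r} := by
    intro n
    induction n with
    | zero => simp
    | succ n ih =>
      have h1 : (1 : Rr p r) - (((uu hp)^(n+1) : (Rr p r)ˣ) : Rr p r)
          = ((1 : Rr p r) - (((uu hp)^n : (Rr p r)ˣ) : Rr p r))
            + (((uu hp)^n : (Rr p r)ˣ) : Rr p r) * ((1 : Rr p r) - ((uu hp : (Rr p r)ˣ) : Rr p r)) := by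
        rw [pow_succ, Units.val_mul]; ring
      rw [h1]
      apply add_mem ih
      apply Ideal.mul_mem_left
      rw [uu_val]
      have : (1 : Rr p r) - (lam p r + 1) = -(lam p r) := by ring
      rw [this]
      exact neg_mem (Ideal.subset_span rfl)
  obtain ⟨c, hc⟩ := c
  rw [Hgrp, Subgroup.mem_zpowers_iff] at hc
  obtain ⟨j, hj⟩ := hc
  rcases j with n | n
  · rw [show Int.ofNat n = (n : ℤ) from rfl, zpow_natCast] at hj
    simpa [← hj] using haux n
  · rw [zpow_negSucc] at hj
    have := units_sub_one_aux (Ideal.span {lam p r}) ((uu hp)^(n+1)) (haux (n+1))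
    simpa [← hj] using this

lemma Gam_normal (I : Ideal (Rr p r)) : (Gam hp hr I).Normal := by
  constructor
  intro n hn g
  obtain ⟨v, hv, rfl⟩ := (mem_Gam hp hr).mp hn
  rw [conj_inl]
  rw [phi_apply]
  apply inl_mem_Gam
  simp only [toAdd_ofAdd]
  exact I.mul_mem_left _ hv

lemma comm_Gam_top (I : Ideal (Rr p r)) :
    ⁅Gam hp hr I, (⊤ : Subgroup (K hp hr))⁆ = Gam hp hr (Ideal.span {lam p r} * I) := by
  apply le_antisymm
  · rw [Subgroup.commutator_le]
    intro g1 hg1 g2 _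
    obtain ⟨v, hv, rfl⟩ := (mem_Gam hp hr).mp hg1
    rw [comm_inl]
    apply inl_mem_Gam
    simp only [toAdd_ofAdd]
    exact Ideal.mul_mem_mul (units_sub_one g2.right) hv
  · intro g hg
    obtain ⟨v, hv, rfl⟩ := (mem_Gam hp hr).mp hg
    refine Submodule.mul_induction_on hv ?_ ?_
    · intro a ha b hb
      obtain ⟨c', hc'⟩ := Ideal.mem_span_singleton'.mp ha
      have hz : c' * b ∈ I := I.mul_mem_left _ hb
      have hcomm := comm_inl hp hr (Multiplicative.ofAdd (c' * b)) (inr (y0 hp))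
      have hmem2 : ⁅(inl (Multiplicative.ofAdd (c' * b)) : K hp hr), inr (y0 hp)⁆
          ∈ ⁅Gam hp hr I, (⊤ : Subgroup (K hp hr))⁆ :=
        Subgroup.commutator_mem_commutator (inl_mem_Gam hp hr hz) (Subgroup.mem_top _)
      have hval : (((inr (y0 hp) : K hp hr).right : (Rr p r)ˣ) : Rr p r) = lam p r + 1 := rfl
      have heq : (inl (Multiplicative.ofAdd (a * b)) : K hp hr)
          = (⁅(inl (Multiplicative.ofAdd (c' * b)) : K hp hr), inr (y0 hp)⁆)⁻¹ := by
        rw [hcomm, ← map_inv, ← ofAdd_neg]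
        congr 2
        simp only [toAdd_ofAdd, hval]
        linear_combination (-b) * hc'
      rw [heq]
      exact inv_mem hmem2
    · intro z w hz hw
      have : (inl (Multiplicative.ofAdd (z + w)) : K hp hr)
          = inl (Multiplicative.ofAdd z) * inl (Multiplicative.ofAdd w) := by
        rw [← map_mul, ← ofAdd_add]
      rw [this]
      exact mul_mem hz hw

lemma comm_top_top :
    ⁅(⊤ : Subgroup (K hp hr)), (⊤ : Subgroup (K hp hr))⁆ = Gam hp hr (Ideal.span {lam p r}) := by
  have hN := Gam_normal hp hr (Ideal.span {lam p r})
  apply le_antisymm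
  · rw [Subgroup.commutator_le]
    intro g1 _ g2 _
    have base_inl : ∀ (v : Multiplicative (Rr p r)) (b : K hp hr),
        ⁅(inl v : K hp hr), b⁆ ∈ Gam hp hr (Ideal.span {lam p r}) := by
      intro v b
      rw [comm_inl]
      apply inl_mem_Gam
      exact Ideal.mul_mem_right _ _ (units_sub_one b.right)
    have base_inr : ∀ (c : Hgrp (p := p) (r := r) hp) (b : K hp hr),
        ⁅(inr c : K hp hr), b⁆ ∈ Gam hp hr (Ideal.span {lam p r}) := by
      intro c b
      have hdec : b = inl b.left * inr b.right := (inl_left_mul_inr_right b).symm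
      have idR : ∀ (g h1 h2 : K hp hr),
          ⁅g, h1 * h2⁆ = ⁅g, h1⁆ * (h1 * ⁅g, h2⁆ * h1⁻¹) := by
        intro g h1 h2; group
      rw [hdec, idR]
      apply mul_mem
      · rw [← commutatorElement_inv]
        exact inv_mem (base_inl b.left (inr c))
      · apply hN.conj_mem
        have : ⁅(inr c : K hp hr), (inr b.right : K hp hr)⁆ = 1 := by
          rw [← map_commutatorElement]
          have : ⁅c, b.right⁆ = 1 := by
            rw [commutatorElement_def, mul_comm c b.right]
            group
          rw [this, map_one]
        rw [this]
        exact one_mem _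
    have hdec1 : g1 = inl g1.left * inr g1.right := (inl_left_mul_inr_right g1).symm
    have idL : ∀ (g1' g2' g3 : K hp hr),
        ⁅g1' * g2', g3⁆ = (g1' * ⁅g2', g3⁆ * g1'⁻¹) * ⁅g1', g3⁆ := by
      intro a b c; group
    rw [hdec1, idL]
    apply mul_mem
    · exact hN.conj_mem _ (base_inr g1.right g2) _
    · exact base_inl g1.left g2
  · intro g hg
    obtain ⟨v, hv, rfl⟩ := (mem_Gam hp hr).mp hg
    obtain ⟨c', hc'⟩ := Ideal.mem_span_singleton'.mp hv
    have hcomm := comm_inl hp hr (Multiplicative.ofAdd c') (inr (y0 hp))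
    have hmem2 : ⁅(inl (Multiplicative.ofAdd c') : K hp hr), inr (y0 hp)⁆
        ∈ ⁅(⊤ : Subgroup (K hp hr)), (⊤ : Subgroup (K hp hr))⁆ :=
      Subgroup.commutator_mem_commutator (Subgroup.mem_top _) (Subgroup.mem_top _)
    have hval : (((inr (y0 hp) : K hp hr).right : (Rr p r)ˣ) : Rr p r) = lam p r + 1 := rfl
    have heq : (inl (Multiplicative.ofAdd v) : K hp hr)
        = (⁅(inl (Multiplicative.ofAdd c') : K hp hr), inr (y0 hp)⁆)⁻¹ := by
      rw [hcomm, ← map_inv, ← ofAdd_neg]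
      congr 2
      simp only [toAdd_ofAdd, hval]
      linear_combination -hc'
    rw [heq]
    exact inv_mem hmem2

lemma lcs_eq (n : ℕ) :
    (⊤ : Subgroup (K hp hr)).lowerCentralSeries (n + 1) = Gam hp hr (Ideal.span {lam p r} ^ (n + 1)) := by
  induction n with
  | zero =>
    have h0 : (⊤ : Subgroup (K hp hr)).lowerCentralSeries 1
        = ⁅(⊤ : Subgroup (K hp hr)), (⊤ : Subgroup (K hp hr))⁆ := by
      rw [show (1 : ℕ) = 0 + 1 from rfl]
      rfl
    rw [h0, comm_top_top, pow_one]
  | succ n ih =>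
    have h1 : (⊤ : Subgroup (K hp hr)).lowerCentralSeries (n + 2)
        = ⁅(⊤ : Subgroup (K hp hr)).lowerCentralSeries (n + 1), (⊤ : Subgroup (K hp hr))⁆ := rfl
    rw [h1, ih, comm_Gam_top, ← pow_succ']

lemma Gam_bot : Gam hp hr ⊥ = ⊥ := by
  rw [eq_bot_iff]
  intro g hg
  obtain ⟨v, hv, rfl⟩ := (mem_Gam hp hr).mp hg
  rw [Ideal.mem_bot] at hv
  subst hv
  rw [Subgroup.mem_bot, ofAdd_zero, map_one]

lemma lam_mul_p_ne (hp : p.Prime) (hr : 1 ≤ r) : lam p r * ((p : Rr p r))^(r-1) ≠ 0 := by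
  intro h
  apply not_mem_J0 hp hr
  rw [← Ideal.Quotient.eq_zero_iff_mem]
  have : Ideal.Quotient.mk (J0 p r) ((p : R0 p r)^(r-1) * lam0 p r)
      = lam p r * ((p : Rr p r))^(r-1) := by
    rw [map_mul, map_pow, map_natCast, lam, mul_comm]
  rw [this, h]

lemma pr1_ne (hp : p.Prime) (hr : 1 ≤ r) : ((p : Rr p r))^(r-1) ≠ 0 := by
  intro h
  exact lam_mul_p_ne hp hr (by rw [h, mul_zero])

lemma lam_ne (hp : p.Prime) (hr : 1 ≤ r) : lam p r ≠ 0 := by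
  intro h
  exact lam_mul_p_ne hp hr (by rw [h, zero_mul])

lemma lam_m1_ne (hp : p.Prime) (hr : 1 ≤ r) : (lam p r)^((r-1)*(p-1)+1) ≠ 0 := by
  intro h
  apply lam0_m1_not_mem hp hr
  rw [← Ideal.Quotient.eq_zero_iff_mem, map_pow]
  exact h

lemma lam_m2_eq (hp : p.Prime) (hr : 1 ≤ r) : (lam p r)^((r-1)*(p-1)+2) = 0 := by
  rw [lam, ← map_pow, Ideal.Quotient.eq_zero_iff_mem]
  exact lam0_pow_mem hp (r-1)

lemma cast_prr (hp : p.Prime) (hr : 1 ≤ r) : ((p^r : ℕ) : Rr p r) = 0 := by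
  have : ((p^r : ℕ) : Rr p r) = algebraMap (ZMod (p^r)) (Rr p r) ((p^r : ℕ) : ZMod (p^r)) :=
    (map_natCast _ _).symm
  rw [this, ZMod.natCast_self, map_zero]

lemma order_y (hp : p.Prime) (hr : 1 ≤ r) : orderOf (inr (y0 hp) : K hp hr) = p := by
  haveI := Fact.mk hp
  have huu : orderOf (uu (p := p) (r := r) hp) = p := by
    apply orderOf_eq_prime (uu_pow hp)
    intro h
    apply lam_ne hp hr
    have h2 := congrArg (fun z : (Rr p r)ˣ => (z : Rr p r)) h
    simp only [uu_val, Units.val_one] at h2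
    rwa [add_eq_right] at h2
  have h1 : orderOf (inr (y0 hp) : K hp hr) = orderOf (y0 hp) :=
    orderOf_injective (inr : _ →* K hp hr) inr_injective _
  have h2 : orderOf ((Hgrp (p := p) (r := r) hp).subtype (y0 hp)) = orderOf (y0 hp) :=
    orderOf_injective _ Subtype.coe_injective _
  have h3 : (Hgrp (p := p) (r := r) hp).subtype (y0 hp) = uu hp := rfl
  rw [h1, ← h2, h3, huu]

lemma order_x (hp : p.Prime) (hr : 1 ≤ r) :
    orderOf (inl (Multiplicative.ofAdd (1 : Rr p r)) : K hp hr) = p^r := by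
  rw [orderOf_injective (inl : _ →* K hp hr) inl_injective,
    orderOf_ofAdd_eq_addOrderOf]
  have hd : addOrderOf (1 : Rr p r) ∣ p^r := by
    apply addOrderOf_dvd_of_nsmul_eq_zero
    rw [nsmul_eq_mul, mul_one, cast_prr hp hr]
  obtain ⟨k, hk, he⟩ := (Nat.dvd_prime_pow hp).mp hd
  rcases Nat.lt_or_ge k r with hkr | hkr
  · exfalso
    apply pr1_ne hp hr
    have hdvd : addOrderOf (1 : Rr p r) ∣ p^(r-1) := by
      rw [he]; exact pow_dvd_pow p (by omega)
    have := addOrderOf_dvd_iff_nsmul_eq_zero.mp hdvd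
    rw [nsmul_eq_mul, mul_one] at this
    rw [← this]
    push_cast
    ring
  · rw [he]; congr 1; omega

lemma noncomm (hp : p.Prime) (hr : 1 ≤ r) :
    (inl (Multiplicative.ofAdd (1 : Rr p r)) : K hp hr)^(p^(r-1)) * inr (y0 hp)
      ≠ inr (y0 hp) * (inl (Multiplicative.ofAdd (1 : Rr p r)) : K hp hr)^(p^(r-1)) := by
  intro h
  apply lam_mul_p_ne hp hr
  have hxN : (inl (Multiplicative.ofAdd (1 : Rr p r)) : K hp hr)^(p^(r-1))
      = inl (Multiplicative.ofAdd (((p^(r-1) : ℕ) : Rr p r))) := by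
    rw [← map_pow]
    congr 1
    rw [← ofAdd_nsmul, nsmul_eq_mul, mul_one]
  rw [hxN] at h
  have hleft := congrArg SemidirectProduct.left h
  simp only [mul_left, left_inl, left_inr, right_inl, right_inr, map_one, mul_one, one_mul] at hleft
  rw [phi_apply] at hleft
  have hval : (((y0 hp : Hgrp (p := p) (r := r) hp) : (Rr p r)ˣ) : Rr p r) = lam p r + 1 := rfl
  rw [hval] at hleft
  have h2 : ((p^(r-1) : ℕ) : Rr p r) = (lam p r + 1) * ((p^(r-1) : ℕ) : Rr p r) := by
    have := congrArg Multiplicative.toAdd hleft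
    simpa using this
  have h3 : lam p r * ((p^(r-1) : ℕ) : Rr p r) = 0 := by linear_combination -h2
  rw [← h3]
  push_cast
  ring

lemma span_lam0_top (hp : p.Prime) (hr : 1 ≤ r) :
    Submodule.span (ZMod (p^r)) (Set.range fun k : ℕ => (lam0 p r)^k) = ⊤ := by
  set pb := AdjoinRoot.powerBasis' (monic_fp hp hr) with hpb
  have hgen : pb.gen = lam0 p r := by rw [hpb, powerBasis'_gen]; rfl
  rw [eq_top_iff, ← pb.basis.span_eq]
  apply Submodule.span_mono
  rintro z ⟨i, rfl⟩
  exact ⟨(i : ℕ), by rw [pb.basis_eq_pow, hgen]⟩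

lemma span_lam_top (hp : p.Prime) (hr : 1 ≤ r) :
    Submodule.span (ZMod (p^r)) (Set.range fun k : ℕ => (lam p r)^k) = ⊤ := by
  have hL := span_lam0_top hp hr
  set L := (Ideal.Quotient.mkₐ (ZMod (p^r)) (J0 p r)).toLinearMap with hLdef
  have hsurj : Function.Surjective L := Ideal.Quotient.mk_surjective
  have h1 : Submodule.map L ⊤ = ⊤ := by
    rw [Submodule.map_top, LinearMap.range_eq_top]
    exact hsurj
  rw [← hL, Submodule.map_span] at h1
  have h2 : L '' (Set.range fun k : ℕ => (lam0 p r)^k)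
      = Set.range fun k : ℕ => (lam p r)^k := by
    rw [← Set.range_comp]
    apply congrArg
    funext k
    show Ideal.Quotient.mkₐ (ZMod (p^r)) (J0 p r) ((lam0 p r)^k) = (lam p r)^k
    rw [map_pow, lam]
    rfl
  rw [h2] at h1
  exact h1

lemma span_u_top (hp : p.Prime) (hr : 1 ≤ r) :
    Submodule.span (ZMod (p^r)) (Set.range fun k : ℕ => (lam p r + 1)^k) = ⊤ := by
  rw [eq_top_iff, ← span_lam_top hp hr]
  rw [Submodule.span_le]
  rintro z ⟨i, rfl⟩
  show (lam p r)^i ∈ _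
  have hexp : (lam p r)^i = ∑ k ∈ Finset.range (i + 1),
      (lam p r + 1)^k * (-1 : Rr p r)^(i - k) * (i.choose k : Rr p r) := by
    have := add_pow (lam p r + 1) (-1 : Rr p r) i
    simp only [add_neg_cancel_right] at this
    exact this
  rw [hexp]
  apply Submodule.sum_mem
  intro k _
  have hterm : (lam p r + 1)^k * (-1 : Rr p r)^(i - k) * (i.choose k : Rr p r)
      = (((-1 : ZMod (p^r))^(i - k) * (i.choose k : ZMod (p^r)))) • (lam p r + 1)^k := by
    rw [Algebra.smul_def, map_mul, map_pow, map_neg, map_one, map_natCast]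
    ring
  rw [hterm]
  exact Submodule.smul_mem _ _ (Submodule.subset_span ⟨k, rfl⟩)

lemma closure_xy (hp : p.Prime) (hr : 1 ≤ r) :
    Subgroup.closure ({inr (y0 hp), inl (Multiplicative.ofAdd (1 : Rr p r))} : Set (K hp hr))
      = ⊤ := by
  set G := Subgroup.closure
    ({inr (y0 hp), inl (Multiplicative.ofAdd (1 : Rr p r))} : Set (K hp hr)) with hG
  have hy : (inr (y0 hp) : K hp hr) ∈ G :=
    Subgroup.subset_closure (Set.mem_insert _ _)
  have hx : (inl (Multiplicative.ofAdd (1 : Rr p r)) : K hp hr) ∈ G :=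
    Subgroup.subset_closure (Set.mem_insert_of_mem _ rfl)
  have hinr : ∀ c : Hgrp (p := p) (r := r) hp, (inr c : K hp hr) ∈ G := by
    intro c
    obtain ⟨j, hj⟩ := Subgroup.mem_zpowers_iff.mp c.2
    have hc : c = (y0 hp)^j := by
      apply Subtype.ext
      rw [← hj]
      rfl
    rw [hc, map_zpow]
    exact zpow_mem hy j
  have hmulu : ∀ v : Rr p r, (inl (Multiplicative.ofAdd v) : K hp hr) ∈ G →
      (inl (Multiplicative.ofAdd ((lam p r + 1) * v)) : K hp hr) ∈ G := by
    intro v hv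
    have hconj : (inl (Multiplicative.ofAdd ((lam p r + 1) * v)) : K hp hr)
        = inr (y0 hp) * inl (Multiplicative.ofAdd v) * (inr (y0 hp))⁻¹ := by
      rw [conj_inl hp hr, phi_apply]
      rfl
    rw [hconj]
    exact mul_mem (mul_mem hy hv) (inv_mem hy)
  haveI : NeZero (p^r) := ⟨(Nat.pow_pos (n := r) hp.pos).ne'⟩
  have hT : ∀ v : Rr p r, (inl (Multiplicative.ofAdd v) : K hp hr) ∈ G := by
    set T : Submodule (ZMod (p^r)) (Rr p r) :=
      { carrier := {v | (inl (Multiplicative.ofAdd v) : K hp hr) ∈ G}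
        add_mem' := by
          intro a b ha hb
          have : (inl (Multiplicative.ofAdd (a + b)) : K hp hr)
              = inl (Multiplicative.ofAdd a) * inl (Multiplicative.ofAdd b) := by
            rw [← map_mul, ← ofAdd_add]
          simp only [Set.mem_setOf_eq] at *
          rw [this]
          exact mul_mem ha hb
        zero_mem' := by
          simp only [Set.mem_setOf_eq, ofAdd_zero, map_one]
          exact one_mem G
        smul_mem' := by
          intro a v hv
          simp only [Set.mem_setOf_eq] at *
          have ha : a • v = ZMod.val a • v := by
            conv_lhs => rw [← ZMod.natCast_zmod_val a]
            rw [Nat.cast_smul_eq_nsmul]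
          rw [ha, ofAdd_nsmul, map_pow]
          exact pow_mem hv _ } with hTdef
    have hrange : ∀ k : ℕ, ((lam p r + 1)^k) ∈ T := by
      intro k
      induction k with
      | zero => rw [pow_zero]; exact hx
      | succ k ih =>
        have : (lam p r + 1)^(k+1) = (lam p r + 1) * (lam p r + 1)^k := by ring
        rw [this]
        exact hmulu _ ih
    have htop : T = ⊤ := by
      rw [eq_top_iff, ← span_u_top hp hr, Submodule.span_le]
      rintro z ⟨k, rfl⟩
      exact hrange k
    intro v
    have : v ∈ T := htop ▸ Submodule.mem_top
    exact this
  rw [eq_top_iff]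
  intro g _
  rw [← inl_left_mul_inr_right g]
  exact mul_mem (hT (Multiplicative.toAdd g.left)) (hinr g.right)

end ExGrpAux

/-- For every prime `p` and positive integer `r`, there exists a group `K` of nilpotency class
exactly `2 + (r-1)(p-1)` (i.e. `γ_{2+(r-1)(p-1)+1}(K)` is trivial and `γ_{2+(r-1)(p-1)}(K)` is
not), generated by elements `y` and `x` of orders `p` and `p^r` respectively, such that
`x^(p^(r-1))` does not commute with `y`. -/
theorem exists_group_power_of_generator_not_central (p r : ℕ) (hp : p.Prime) (hr : 1 ≤ r) :
    ∃ (K : Type) (_ : Group K) (y x : K),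
      (⊤ : Subgroup K).lowerCentralSeries (2 + (r - 1) * (p - 1)) = ⊥ ∧
      (⊤ : Subgroup K).lowerCentralSeries (1 + (r - 1) * (p - 1)) ≠ ⊥ ∧
      Subgroup.closure ({y, x} : Set K) = ⊤ ∧
      orderOf y = p ∧
      orderOf x = p ^ r ∧
      x ^ (p ^ (r - 1)) * y ≠ y * x ^ (p ^ (r - 1)) := by
  refine ⟨ExGrpAux.K hp hr, inferInstance,
    SemidirectProduct.inr (ExGrpAux.y0 hp),
    SemidirectProduct.inl (Multiplicative.ofAdd (1 : ExGrpAux.Rr p r)),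
    ?_, ?_, ?_, ?_, ?_, ?_⟩
  · rw [show 2 + (r - 1) * (p - 1) = ((r - 1) * (p - 1) + 1) + 1 from by omega,
      ExGrpAux.lcs_eq hp hr, Ideal.span_singleton_pow]
    have he : (ExGrpAux.lam p r) ^ ((r - 1) * (p - 1) + 1 + 1) = 0 := by
      rw [show (r - 1) * (p - 1) + 1 + 1 = (r - 1) * (p - 1) + 2 from by omega]
      exact ExGrpAux.lam_m2_eq hp hr
    rw [he, Ideal.span_singleton_eq_bot.mpr rfl, ExGrpAux.Gam_bot]
  · rw [show 1 + (r - 1) * (p - 1) = ((r - 1) * (p - 1)) + 1 from by omega,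
      ExGrpAux.lcs_eq hp hr, Ideal.span_singleton_pow]
    intro heq
    have hmem := ExGrpAux.inl_mem_Gam hp hr
      (Ideal.subset_span rfl :
        (ExGrpAux.lam p r) ^ ((r - 1) * (p - 1) + 1)
          ∈ Ideal.span {(ExGrpAux.lam p r) ^ ((r - 1) * (p - 1) + 1)})
    rw [heq, Subgroup.mem_bot] at hmem
    have := SemidirectProduct.inl_injective (hmem.trans (map_one _).symm)
    rw [ofAdd_eq_one] at this
    exact ExGrpAux.lam_m1_ne hp hr this
  · exact ExGrpAux.closure_xy hp hr
  · exact ExGrpAux.order_y hp hr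
  · exact ExGrpAux.order_x hp hr
  · exact ExGrpAux.noncomm hp hr
end

section
/- Let p be a prime, let F = C_p * Z be the free product of a cyclic group of order p generated by a and an infinite cyclic group generated by z, and let 𝒢 = F/γ_3(F) be the 2-nilpotent product of C_p and Z; write z̄ for the image of z in 𝒢. Then the intersection of the center Z(𝒢) with the cyclic subgroup generated by z̄ equals the cyclic subgroup generated by z̄^p. -/
open scoped commutatorElement

/-- The free product `C_p * ℤ` of a cyclic group of order `p` and an infinite cyclic group. -/
abbrev FreeProd (p : ℕ) : Type := Monoid.Coprod (Multiplicative (ZMod p)) (Multiplicative ℤ)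

/-- The generator `a` of the `C_p` factor of `C_p * ℤ`. -/
def aGen (p : ℕ) : FreeProd p := Monoid.Coprod.inl (Multiplicative.ofAdd (1 : ZMod p))

/-- The generator `z` of the `ℤ` factor of `C_p * ℤ`. -/
def zGen (p : ℕ) : FreeProd p := Monoid.Coprod.inr (Multiplicative.ofAdd (1 : ℤ))

/-- The `2`-nilpotent product `𝒢 = (C_p * ℤ)/γ_3(C_p * ℤ)`; note that
`γ_{n+1}(F) = lowerCentralSeries F n`. -/
abbrev NilProd2 (p : ℕ) : Type := FreeProd p ⧸ (⊤ : Subgroup (FreeProd p)).lowerCentralSeries 2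

/-! ### A concrete Heisenberg-type group over `ZMod p` used to detect commutators -/

@[ext]
structure Heis (p : ℕ) where
  a : ZMod p
  b : ZMod p
  c : ZMod p

namespace Heis

variable {p : ℕ}

instance : Mul (Heis p) := ⟨fun x y => ⟨x.a + y.a, x.b + y.b, x.c + y.c + x.b * y.a⟩⟩
instance : One (Heis p) := ⟨⟨0, 0, 0⟩⟩
instance : Inv (Heis p) := ⟨fun x => ⟨-x.a, -x.b, x.b * x.a - x.c⟩⟩

theorem mul_def (x y : Heis p) :
    x * y = ⟨x.a + y.a, x.b + y.b, x.c + y.c + x.b * y.a⟩ := rfl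

theorem one_def : (1 : Heis p) = ⟨0, 0, 0⟩ := rfl

theorem inv_def (x : Heis p) : x⁻¹ = ⟨-x.a, -x.b, x.b * x.a - x.c⟩ := rfl

instance : Group (Heis p) where
  mul_assoc x y z := by ext <;> simp [mul_def] <;> ring
  one_mul x := by ext <;> simp [mul_def, one_def]
  mul_one x := by ext <;> simp [mul_def, one_def]
  inv_mul_cancel x := by ext <;> simp [mul_def, one_def, inv_def] <;> ring

theorem commutator_eq (x y : Heis p) :
    ⁅x, y⁆ = ⟨0, 0, x.b * y.a - y.b * x.a⟩ := by
  ext <;> simp [commutatorElement_def, mul_def, inv_def] <;> ring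

theorem central_of (u : Heis p) (h1 : u.a = 0) (h2 : u.b = 0) (w : Heis p) :
    w * u = u * w := by
  ext <;> simp [mul_def, h1, h2] <;> ring

theorem lcs_two_eq_bot : (⊤ : Subgroup (Heis p)).lowerCentralSeries 2 = ⊥ := by
  have h1 : (⊤ : Subgroup (Heis p)).lowerCentralSeries 1 ≤ Subgroup.centralizer (⊤ : Subgroup (Heis p)) := by
    have e1 : (⊤ : Subgroup (Heis p)).lowerCentralSeries 1
        = ⁅(⊤ : Subgroup (Heis p)), (⊤ : Subgroup (Heis p))⁆ := rfl
    rw [e1, Subgroup.commutator_le]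
    intro g1 _ g2 _
    rw [Subgroup.mem_centralizer_iff]
    intro h _
    rw [commutator_eq]
    exact central_of _ rfl rfl h
  have e2 : (⊤ : Subgroup (Heis p)).lowerCentralSeries 2
      = ⁅(⊤ : Subgroup (Heis p)).lowerCentralSeries 1, (⊤ : Subgroup (Heis p))⁆ := rfl
  rw [e2, Subgroup.commutator_eq_bot_iff_le_centralizer]
  exact h1

end Heis

/-! ### The detecting homomorphism `F → Heis p` -/

/-- The map `C_p → Heis p` sending the generator to `⟨1,0,0⟩`. -/
def phiA (p : ℕ) : Multiplicative (ZMod p) →* Heis p where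
  toFun m := ⟨m.toAdd, 0, 0⟩
  map_one' := by ext <;> simp [Heis.one_def]
  map_mul' x y := by ext <;> simp [Heis.mul_def]

/-- The map `ℤ → Heis p` sending the generator to `⟨0,1,0⟩`. -/
def phiZ (p : ℕ) : Multiplicative ℤ →* Heis p where
  toFun m := ⟨0, (m.toAdd : ZMod p), 0⟩
  map_one' := by ext <;> simp [Heis.one_def]
  map_mul' x y := by ext <;> simp [Heis.mul_def]

/-- The detecting homomorphism. -/
def phi (p : ℕ) : FreeProd p →* Heis p := Monoid.Coprod.lift (phiA p) (phiZ p)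

theorem lcs_two_le_ker_phi (p : ℕ) :
    (⊤ : Subgroup (FreeProd p)).lowerCentralSeries 2 ≤ (phi p).ker := by
  intro x hx
  have h : phi p x ∈ (⊤ : Subgroup (Heis p)).lowerCentralSeries 2 :=
    by
      have hm : phi p x ∈ ((⊤ : Subgroup (FreeProd p)).lowerCentralSeries 2).map (phi p) :=
        ⟨x, hx, rfl⟩
      rw [Subgroup.map_lowerCentralSeries] at hm
      have mono : ∀ n, ((⊤ : Subgroup (FreeProd p)).map (phi p)).lowerCentralSeries n
          ≤ (⊤ : Subgroup (Heis p)).lowerCentralSeries n := by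
        intro n
        induction n with
        | zero => exact le_top
        | succ n ih => exact Subgroup.commutator_mono ih le_top
      exact mono 2 hm
  rw [Heis.lcs_two_eq_bot, Subgroup.mem_bot] at h
  exact h

/-! ### Triple commutators vanish in the 2-nilpotent product -/

theorem triple_commutator_eq_one (p : ℕ) (x y w : NilProd2 p) :
    ⁅⁅x, y⁆, w⁆ = 1 := by
  obtain ⟨X, rfl⟩ := QuotientGroup.mk_surjective x
  obtain ⟨Y, rfl⟩ := QuotientGroup.mk_surjective y
  obtain ⟨W, rfl⟩ := QuotientGroup.mk_surjective w
  have hmem : ⁅⁅X, Y⁆, W⁆ ∈ (⊤ : Subgroup (FreeProd p)).lowerCentralSeries 2 := by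
    have h1 : ⁅X, Y⁆ ∈ (⊤ : Subgroup (FreeProd p)).lowerCentralSeries 1 :=
      Subgroup.commutator_mem_commutator (Subgroup.mem_top X) (Subgroup.mem_top Y)
    exact Subgroup.commutator_mem_commutator h1 (Subgroup.mem_top W)
  have key : (QuotientGroup.mk ⁅⁅X, Y⁆, W⁆ : NilProd2 p)
      = ⁅⁅(QuotientGroup.mk X : NilProd2 p), (QuotientGroup.mk Y : NilProd2 p)⁆,
          (QuotientGroup.mk W : NilProd2 p)⁆ := by
    exact map_commutatorElement (QuotientGroup.mk' _) _ _
  rw [← key, QuotientGroup.eq_one_iff]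
  exact hmem

section ClassTwo

variable {G : Type*} [Group G] (hG : ∀ x y w : G, ⁅⁅x, y⁆, w⁆ = 1)

include hG

theorem comm_central (x y w : G) : Commute ⁅x, y⁆ w :=
  commutatorElement_eq_one_iff_commute.mp (hG x y w)

theorem comm_mul_right (x y z : G) : ⁅x, y * z⁆ = ⁅x, y⁆ * ⁅x, z⁆ := by
  have key : ⁅x, y * z⁆ = ⁅x, y⁆ * (y * ⁅x, z⁆ * y⁻¹) := by
    simp only [commutatorElement_def]
    group
  rw [key, (comm_central hG x z y).symm.eq, mul_inv_cancel_right]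

theorem comm_pow_right (x y : G) (n : ℕ) : ⁅x, y ^ n⁆ = ⁅x, y⁆ ^ n := by
  induction n with
  | zero => simp
  | succ n ih => rw [pow_succ, comm_mul_right hG, ih, pow_succ]

theorem comm_pow_left (x y : G) (n : ℕ) : ⁅x ^ n, y⁆ = ⁅x, y⁆ ^ n := by
  rw [← commutatorElement_inv, comm_pow_right hG, ← inv_pow, commutatorElement_inv]

end ClassTwo

/-! ### The main theorem -/

/-- In the `2`-nilpotent product `𝒢` of `C_p` and `ℤ`, the intersection of the center with
the cyclic subgroup generated by the image `z̄` of `z` is the cyclic subgroup generated by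
`z̄^p`. -/
theorem center_inter_zpowers_eq_of_class_two (p : ℕ) (hp : p.Prime) :
    Subgroup.center (NilProd2 p) ⊓
        Subgroup.zpowers (QuotientGroup.mk (zGen p) : NilProd2 p) =
      Subgroup.zpowers ((QuotientGroup.mk (zGen p) : NilProd2 p) ^ p) := by
  haveI : NeZero p := ⟨hp.ne_zero⟩
  set zb : NilProd2 p := QuotientGroup.mk (zGen p) with hzb
  set ab : NilProd2 p := QuotientGroup.mk (aGen p) with hab
  have hG := triple_commutator_eq_one p
  -- `a^p = 1` in the quotient
  have hap : ab ^ p = 1 := by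
    rw [hab, ← QuotientGroup.mk_pow]
    have : aGen p ^ p = 1 := by
      rw [aGen, ← map_pow, ← ofAdd_nsmul]
      simp
    rw [this, QuotientGroup.mk_one]
  -- `z^p` commutes with everything
  have hzp_comm : ∀ g : NilProd2 p, Commute g (zb ^ p) := by
    have hcomm_a : Commute ab (zb ^ p) := by
      rw [← commutatorElement_eq_one_iff_commute, comm_pow_right hG,
        ← comm_pow_left hG, hap, commutatorElement_one_left]
    intro g
    obtain ⟨x, rfl⟩ := QuotientGroup.mk_surjective g
    induction x using Monoid.Coprod.induction_on with
    | inl m =>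
      have hm : Monoid.Coprod.inl m = aGen p ^ (m.toAdd.val) := by
        rw [aGen, ← map_pow, ← ofAdd_nsmul]
        congr 1
        simp [nsmul_eq_mul, ZMod.natCast_rightInverse m.toAdd]
      rw [hm, QuotientGroup.mk_pow]
      exact hcomm_a.pow_left _
    | inr n =>
      have hn : Monoid.Coprod.inr n = zGen p ^ (n.toAdd) := by
        rw [zGen, ← map_zpow, ← ofAdd_zsmul]
        congr 1
        simp
      rw [hn, QuotientGroup.mk_zpow]
      exact ((Commute.refl zb).pow_right p).zpow_left _
    | mul x y hx hy =>
      rw [QuotientGroup.mk_mul]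
      exact hx.mul_left hy
  apply le_antisymm
  · rintro g ⟨hgc, hgz⟩
    obtain ⟨k, hk⟩ := Subgroup.mem_zpowers_iff.mp hgz
    -- g = zb ^ k is central; show p ∣ k
    have hcomm : Commute (zb ^ k) ab := by
      rw [hk]
      exact (Subgroup.mem_center_iff.mp hgc ab).symm
    have h1 : ⁅zGen p ^ k, aGen p⁆ ∈ (⊤ : Subgroup (FreeProd p)).lowerCentralSeries 2 := by
      rw [← QuotientGroup.eq_one_iff]
      have key : (QuotientGroup.mk ⁅zGen p ^ k, aGen p⁆ : NilProd2 p)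
          = ⁅(QuotientGroup.mk (zGen p ^ k) : NilProd2 p), (QuotientGroup.mk (aGen p) : NilProd2 p)⁆ := by
        exact map_commutatorElement (QuotientGroup.mk' _) _ _
      rw [key, QuotientGroup.mk_zpow]
      exact commutatorElement_eq_one_iff_commute.mpr hcomm
    have h2 : phi p ⁅zGen p ^ k, aGen p⁆ = 1 := lcs_two_le_ker_phi p h1
    rw [map_commutatorElement] at h2
    have hzk : zGen p ^ k = Monoid.Coprod.inr (Multiplicative.ofAdd k) := by
      rw [zGen, ← map_zpow, ← ofAdd_zsmul]
      congr 1
      simp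
    have hphiz : phi p (zGen p ^ k) = ⟨0, (k : ZMod p), 0⟩ := by
      rw [hzk, phi, Monoid.Coprod.lift_apply_inr]
      rfl
    have hphia : phi p (aGen p) = ⟨(1 : ZMod p), 0, 0⟩ := by
      rw [aGen, phi, Monoid.Coprod.lift_apply_inl]
      rfl
    rw [hphiz, hphia, Heis.commutator_eq] at h2
    simp only [Heis.one_def, Heis.mk.injEq] at h2
    have hk0 : (k : ZMod p) = 0 := by
      have := h2.2.2
      simpa using this
    obtain ⟨m, hm⟩ := (ZMod.intCast_zmod_eq_zero_iff_dvd k p).mp hk0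
    refine Subgroup.mem_zpowers_iff.mpr ⟨m, ?_⟩
    rw [← hk, hm, ← zpow_natCast zb p, ← zpow_mul]
  · rw [Subgroup.zpowers_le, Subgroup.mem_inf]
    constructor
    · exact Subgroup.mem_center_iff.mpr fun g => (hzp_comm g).eq
    · exact Subgroup.mem_zpowers_iff.mpr ⟨(p : ℤ), zpow_natCast zb p⟩
end

section
/- Let p be a prime and k ≥ 1 an integer. Let F = C_p * Z be the free product of a cyclic group of order p and an infinite cyclic group. Then the k-nilpotent product F/γ_{k+1}(F) has nilpotency class exactly k. -/
namespace NilpotentProductAux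

open Polynomial SemidirectProduct
open scoped commutatorElement

/-- The truncated polynomial ring `(ZMod p)[X]/(X^k)`. -/
abbrev Rk (p k : ℕ) : Type := Polynomial (ZMod p) ⧸ Ideal.span {(X : Polynomial (ZMod p)) ^ k}

/-- The image of `X` in `Rk`. -/
noncomputable def Xb (p k : ℕ) : Rk p k := Ideal.Quotient.mk _ X

lemma Xb_pow_k (p k : ℕ) : (Xb p k) ^ k = 0 := by
  rw [Xb, ← map_pow, Ideal.Quotient.eq_zero_iff_mem]
  exact Ideal.subset_span rfl

lemma Xb_pow_pred_ne (p k : ℕ) (hp : p.Prime) (hk : 1 ≤ k) : (Xb p k) ^ (k - 1) ≠ 0 := by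
  haveI : Fact p.Prime := ⟨hp⟩
  intro h
  rw [Xb, ← map_pow, Ideal.Quotient.eq_zero_iff_mem, Ideal.mem_span_singleton] at h
  have hX : (X : Polynomial (ZMod p)) ^ (k - 1) ≠ 0 := pow_ne_zero _ X_ne_zero
  have := Polynomial.natDegree_le_of_dvd h hX
  simp only [natDegree_pow, natDegree_X, mul_one] at this
  omega

/-- The unit `1 + X` of `Rk`. -/
noncomputable def u (p k : ℕ) : (Rk p k)ˣ :=
  (IsNilpotent.isUnit_one_add ⟨k, Xb_pow_k p k⟩).unit

lemma u_val (p k : ℕ) : ((u p k : (Rk p k)ˣ) : Rk p k) = 1 + Xb p k := rfl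

/-- `σ m = (1+X)^m` as an element of `Rk`. -/
noncomputable def σ (p k : ℕ) (m : ℤ) : Rk p k := ((u p k ^ m : (Rk p k)ˣ) : Rk p k)

lemma σ_mul (p k : ℕ) (m n : ℤ) : σ p k m * σ p k n = σ p k (m + n) := by
  rw [σ, σ, σ, ← Units.val_mul, ← zpow_add]

lemma σ_zero (p k : ℕ) : σ p k 0 = 1 := by simp [σ]

lemma Xb_dvd_σ_sub_one (p k : ℕ) (m : ℤ) : Xb p k ∣ σ p k m - 1 := by
  let S : Subgroup (Rk p k)ˣ :=
    { carrier := {w | Xb p k ∣ (w : Rk p k) - 1}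
      one_mem' := by simp
      mul_mem' := by
        intro a b ha hb
        show Xb p k ∣ ((a * b : (Rk p k)ˣ) : Rk p k) - 1
        rw [Units.val_mul]
        have h2 : ((a : Rk p k) * b - 1) = (a : Rk p k) * ((b : Rk p k) - 1) +
            ((a : Rk p k) - 1) := by ring
        rw [h2]
        exact dvd_add (Dvd.dvd.mul_left hb _) ha
      inv_mem' := by
        intro a ha
        show Xb p k ∣ ((a⁻¹ : (Rk p k)ˣ) : Rk p k) - 1
        have h : ((a⁻¹ : (Rk p k)ˣ) : Rk p k) * (a : Rk p k) = 1 := by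
          rw [← Units.val_mul, inv_mul_cancel, Units.val_one]
        have h2 : ((a⁻¹ : (Rk p k)ˣ) : Rk p k) - 1 =
            -((a⁻¹ : (Rk p k)ˣ) : Rk p k) * ((a : Rk p k) - 1) := by linear_combination h
        rw [h2]
        exact Dvd.dvd.mul_left ha _ }
  have hu : u p k ∈ S := by
    show Xb p k ∣ ((u p k : (Rk p k)ˣ) : Rk p k) - 1
    rw [u_val]; simp
  have := S.zpow_mem hu m
  exact this

/-- The action of `ℤ` on `Multiplicative (Rk p k)` by multiplication by `1+X`. -/
noncomputable def act (p k : ℕ) : Multiplicative ℤ →* MulAut (Multiplicative (Rk p k)) where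
  toFun g :=
  { toFun := fun v => Multiplicative.ofAdd (σ p k g.toAdd * v.toAdd)
    invFun := fun v => Multiplicative.ofAdd (σ p k (-g.toAdd) * v.toAdd)
    left_inv := by
      intro v
      simp [← mul_assoc, σ_mul, σ_zero]
    right_inv := by
      intro v
      simp [← mul_assoc, σ_mul, σ_zero]
    map_mul' := by
      intro a b
      simp [mul_add, ofAdd_add] }
  map_one' := by
    ext v
    simp [σ_zero]
  map_mul' := by
    intro a b
    ext v
    simp [← mul_assoc, σ_mul, add_comm]

/-- The model group `(ZMod p)[X]/(X^k) ⋊ ℤ`, nilpotent of class exactly `k`. -/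
abbrev Gk (p k : ℕ) : Type := Multiplicative (Rk p k) ⋊[act p k] Multiplicative ℤ


lemma act_toAdd (p k : ℕ) (g : Multiplicative ℤ) (v : Multiplicative (Rk p k)) :
    ((act p k g) v).toAdd = σ p k g.toAdd * v.toAdd := rfl

lemma comm_left (p k : ℕ) (a b : Gk p k) :
    (⁅a, b⁆.left).toAdd = (1 - σ p k b.right.toAdd) * a.left.toAdd
      + (σ p k a.right.toAdd - 1) * b.left.toAdd := by
  simp only [commutatorElement_def, mul_left, inv_left, inv_right, toAdd_mul, act_toAdd,
    toAdd_inv, mul_right]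
  simp only [mul_neg, ← mul_assoc, σ_mul]
  ring_nf
  simp only [add_neg_cancel_comm, add_neg_cancel_right, add_neg_cancel, neg_add_cancel,
    add_neg_cancel_left, σ_zero]
  ring



lemma lcs_succ'' {G : Type*} [Group G] (n : ℕ) :
    (⊤ : Subgroup G).lowerCentralSeries (n + 1) = ⁅(⊤ : Subgroup G).lowerCentralSeries n, ⊤⁆ := rfl

lemma comm_right (p k : ℕ) (a b : Gk p k) : ⁅a, b⁆.right = 1 := by
  rw [show (⁅a, b⁆ : Gk p k).right = rightHom ⁅a, b⁆ from rfl, map_commutatorElement]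
  exact commutatorElement_eq_one_iff_commute.mpr (mul_comm _ _)

/-- The subgroup of `Gk` of elements `(v, 0)` with `X^n ∣ v`. -/
noncomputable def Hsub (p k n : ℕ) : Subgroup (Gk p k) where
  carrier := {g | g.right = 1 ∧ Xb p k ^ n ∣ g.left.toAdd}
  one_mem' := ⟨rfl, by simp⟩
  mul_mem' := by
    rintro a b ⟨ha1, ha2⟩ ⟨hb1, hb2⟩
    refine ⟨by simp [mul_right, ha1, hb1], ?_⟩
    have h : (a * b).left.toAdd = a.left.toAdd + σ p k a.right.toAdd * b.left.toAdd := by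
      simp [mul_left, act_toAdd, toAdd_mul]
    rw [h, ha1]
    simp only [toAdd_one, σ_zero, one_mul]
    exact dvd_add ha2 hb2
  inv_mem' := by
    rintro a ⟨ha1, ha2⟩
    refine ⟨by simp [inv_right, ha1], ?_⟩
    have h : (a⁻¹ : Gk p k).left.toAdd = σ p k (a.right⁻¹).toAdd * (a.left⁻¹).toAdd := by
      rw [inv_left]; exact act_toAdd p k _ _
    rw [h, ha1]
    simp only [inv_one, toAdd_one, σ_zero, one_mul, toAdd_inv]
    exact dvd_neg.mpr ha2

lemma Xb_dvd_one_sub_σ (p k : ℕ) (m : ℤ) : Xb p k ∣ 1 - σ p k m := by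
  have := (Xb_dvd_σ_sub_one p k m).neg_right
  simpa [neg_sub] using this

lemma comm_mem_base (p k : ℕ) (a b : Gk p k) : ⁅a, b⁆ ∈ Hsub p k 1 := by
  refine ⟨comm_right p k a b, ?_⟩
  rw [comm_left, pow_one]
  exact dvd_add ((Xb_dvd_one_sub_σ p k _).mul_right _)
    ((Xb_dvd_σ_sub_one p k _).mul_right _)

lemma comm_mem_step (p k n : ℕ) (a b : Gk p k) (ha : a ∈ Hsub p k n) :
    ⁅a, b⁆ ∈ Hsub p k (n + 1) := by
  obtain ⟨ha1, ha2⟩ := ha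
  refine ⟨comm_right p k a b, ?_⟩
  rw [comm_left, ha1]
  simp only [toAdd_one, σ_zero, sub_self, zero_mul, add_zero]
  rw [pow_succ']
  exact mul_dvd_mul (Xb_dvd_one_sub_σ p k _) ha2

lemma lcs_le_Hsub (p k : ℕ) (n : ℕ) :
    (⊤ : Subgroup (Gk p k)).lowerCentralSeries (n + 1) ≤ Hsub p k (n + 1) := by
  induction n with
  | zero =>
    rw [Subgroup.lowerCentralSeries_succ]
    exact Subgroup.commutator_le.mpr fun g _ h _ => comm_mem_base p k g h
  | succ n ih =>
    rw [Subgroup.lowerCentralSeries_succ]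
    exact Subgroup.commutator_le.mpr fun g hg h _ => comm_mem_step p k (n + 1) g h (ih hg)

lemma lcs_Gk_eq_bot (p k : ℕ) (hk : 1 ≤ k) : (⊤ : Subgroup (Gk p k)).lowerCentralSeries k = ⊥ := by
  obtain ⟨n, rfl⟩ : ∃ n, k = n + 1 := ⟨k - 1, by omega⟩
  rw [eq_bot_iff]
  intro g hg
  obtain ⟨h1, h2⟩ := lcs_le_Hsub p (n + 1) n hg
  rw [Xb_pow_k, zero_dvd_iff] at h2
  have hleft : g.left = 1 := by
    have := congrArg Multiplicative.ofAdd h2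
    simpa using this
  have : g = 1 := SemidirectProduct.ext hleft h1
  simp [this, Subgroup.one_mem]

/-- The homomorphism from the free product to the model group. -/
noncomputable def Φ (p k : ℕ) : FreeProd p →* Gk p k :=
  Monoid.Coprod.lift
    ((inl : Multiplicative (Rk p k) →* Gk p k).comp
      (AddMonoidHom.toMultiplicative ((algebraMap (ZMod p) (Rk p k)).toAddMonoidHom)))
    (inr : Multiplicative ℤ →* Gk p k)

/-- The iterated commutator words in the free product. -/
noncomputable def w (p : ℕ) : ℕ → FreeProd p
  | 0 => Monoid.Coprod.inl (Multiplicative.ofAdd (1 : ZMod p))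
  | (i + 1) => ⁅w p i, Monoid.Coprod.inr (Multiplicative.ofAdd (1 : ℤ))⁆

lemma w_mem (p : ℕ) (i : ℕ) : w p i ∈ (⊤ : Subgroup (FreeProd p)).lowerCentralSeries i := by
  induction i with
  | zero => exact Subgroup.mem_top _
  | succ i ih =>
    rw [Subgroup.lowerCentralSeries_succ]
    exact Subgroup.commutator_mem_commutator ih (Subgroup.mem_top _)

lemma σ_one' (p k : ℕ) : σ p k 1 = 1 + Xb p k := by rw [σ, zpow_one, u_val]

lemma comm_inl_inr (p k : ℕ) (v : Multiplicative (Rk p k)) :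
    ⁅(inl v : Gk p k), (inr (Multiplicative.ofAdd (1 : ℤ)) : Gk p k)⁆
      = inl (Multiplicative.ofAdd (-(Xb p k) * v.toAdd)) := by
  have h1 : (⁅(inl v : Gk p k), (inr (Multiplicative.ofAdd (1 : ℤ)) : Gk p k)⁆).left.toAdd
      = -(Xb p k) * v.toAdd := by
    rw [comm_left]
    simp only [right_inr, left_inr, left_inl, right_inl, toAdd_one, σ_zero, toAdd_ofAdd,
      σ_one', sub_self, zero_mul, add_zero, mul_zero]
    ring
  refine SemidirectProduct.ext ?_ (comm_right p k _ _)
  have := congrArg Multiplicative.ofAdd h1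
  simpa using this

lemma Φ_w (p k : ℕ) (i : ℕ) :
    Φ p k (w p i) = inl (Multiplicative.ofAdd ((-(Xb p k)) ^ i)) := by
  induction i with
  | zero =>
    show Φ p k (Monoid.Coprod.inl (Multiplicative.ofAdd (1 : ZMod p))) = _
    rw [Φ, Monoid.Coprod.lift_apply_inl]
    simp [AddMonoidHom.toMultiplicative]
  | succ i ih =>
    show Φ p k ⁅w p i, Monoid.Coprod.inr (Multiplicative.ofAdd (1 : ℤ))⁆ = _
    rw [map_commutatorElement, ih, Φ, Monoid.Coprod.lift_apply_inr, comm_inl_inr]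
    congr 1
    rw [toAdd_ofAdd, pow_succ']

lemma lcs_le_map_of_surjective {G H : Type*} [Group G] [Group H] (f : G →* H)
    (hf : Function.Surjective f) (n : ℕ) :
    (⊤ : Subgroup H).lowerCentralSeries n ≤ Subgroup.map f ((⊤ : Subgroup G).lowerCentralSeries n) := by
  induction n with
  | zero =>
    rw [Subgroup.lowerCentralSeries_zero, Subgroup.lowerCentralSeries_zero, Subgroup.map_top_of_surjective f hf]
  | succ n ih =>
    rw [lcs_succ'', lcs_succ'']
    calc ⁅(⊤ : Subgroup H).lowerCentralSeries n, (⊤ : Subgroup H)⁆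
        ≤ ⁅Subgroup.map f ((⊤ : Subgroup G).lowerCentralSeries n), Subgroup.map f ⊤⁆ :=
          Subgroup.commutator_mono ih (by rw [Subgroup.map_top_of_surjective f hf])
      _ = Subgroup.map f ⁅(⊤ : Subgroup G).lowerCentralSeries n, ⊤⁆ :=
          (Subgroup.map_commutator _ _ _).symm

end NilpotentProductAux

/-- The `k`-nilpotent product `(C_p * ℤ)/γ_{k+1}(C_p * ℤ)` has nilpotency class exactly `k`:
`γ_{k+1}` of it is trivial and `γ_k` of it is not (recall
`γ_{n+1}(F) = lowerCentralSeries F n`). -/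
theorem nilpotent_product_has_class_exactly (p k : ℕ) (hp : p.Prime) (hk : 1 ≤ k) :
    (⊤ : Subgroup (FreeProd p ⧸ (⊤ : Subgroup (FreeProd p)).lowerCentralSeries k)).lowerCentralSeries k = ⊥ ∧
    (⊤ : Subgroup (FreeProd p ⧸ (⊤ : Subgroup (FreeProd p)).lowerCentralSeries k)).lowerCentralSeries
      (k - 1) ≠ ⊥ := by
  open NilpotentProductAux in
  constructor
  · refine eq_bot_iff.mpr (le_trans
      (lcs_le_map_of_surjective (QuotientGroup.mk' ((⊤ : Subgroup (FreeProd p)).lowerCentralSeries k))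
        (QuotientGroup.mk'_surjective _) k) ?_)
    exact le_of_eq ((Subgroup.map_eq_bot_iff _).mpr (le_of_eq (QuotientGroup.ker_mk' _).symm))
  · intro hbot
    have h1 : Subgroup.map (QuotientGroup.mk' ((⊤ : Subgroup (FreeProd p)).lowerCentralSeries k))
        ((⊤ : Subgroup (FreeProd p)).lowerCentralSeries (k - 1)) = ⊥ :=
      le_bot_iff.mp (hbot ▸ Subgroup.lowerCentralSeries.map _ _)
    have h2 : (⊤ : Subgroup (FreeProd p)).lowerCentralSeries (k - 1) ≤ (⊤ : Subgroup (FreeProd p)).lowerCentralSeries k := by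
      rw [← QuotientGroup.ker_mk' ((⊤ : Subgroup (FreeProd p)).lowerCentralSeries k)]
      exact (Subgroup.map_eq_bot_iff _).mp h1
    have h3 : Φ p k (w p (k - 1)) ∈ (⊤ : Subgroup (Gk p k)).lowerCentralSeries k :=
      Subgroup.lowerCentralSeries.map (Φ p k) k ⟨_, h2 (w_mem p (k - 1)), rfl⟩
    rw [lcs_Gk_eq_bot p k hk, Subgroup.mem_bot, Φ_w] at h3
    have h4 : ((-(Xb p k)) ^ (k - 1) : Rk p k) = 0 := by
      have := congrArg (fun g : Gk p k => g.left.toAdd) h3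
      simpa only [SemidirectProduct.left_inl, toAdd_ofAdd, SemidirectProduct.one_left, toAdd_one] using this
    have h5 : (Xb p k) ^ (k - 1) = 0 := by
      have h6 : (Xb p k) ^ (k - 1) = (-1 : Rk p k) ^ (k - 1) * (-Xb p k) ^ (k - 1) := by
        rw [← mul_pow]; congr 1; ring
      rw [h6, h4, mul_zero]
    exact Xb_pow_pred_ne p k hp hk h5
end
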